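/- arXiv:1403.4275 — 4 statements merged into one kernel-verified Lean document; each statement's English description precedes it below -/
import Mathlib

section
/- Let X, Y, H be as follows: H a real Hilbert space, X and Y Banach spaces with continuous injections X ↪ Y ↪ H having dense images, and T : X → Y a bounded Fredholm operator that is symmetric with respect to the inner product of H (i.e., ⟨T x₁, x₂⟩ = ⟨x₁, T x₂⟩ for all x₁, x₂ ∈ X). Let T* : Y* → X* denote the adjoint extension (using the identification H ≅ H* and the chain X ↪ Y ↪ H = H* ↪ Y* ↪ X*). If T satisfies the ellipticity hypothesis that for all x ∈ Y*, T*(x) ∈ Y implies x ∈ X, then the Fredholm index of T is zero. -/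
/-!
Pairing through `H` sends `ξ ∈ X` to `⟪ξ, ·⟫ ∈ Y*`. By symmetry and density this functional
annihilates `range T` exactly when `T ξ = 0`, and ellipticity says that every functional
annihilating `range T` (i.e. every `φ` with `T* φ = 0 ∈ Y`) arises this way. So `ker T` is
isomorphic to the annihilator of `range T` in `Y*`, which, `range T` being closed of finite
codimension, is the dual of the cokernel.
-/

open Module Function

namespace Submodule

variable {𝕜 Y : Type*} [NontriviallyNormedField 𝕜] [AddCommGroup Y] [TopologicalSpace Y]
  [Module 𝕜 Y]

def strongDualAnnihilator (p : Submodule 𝕜 Y) : Submodule 𝕜 (StrongDual 𝕜 Y) :=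
  p.dualAnnihilator.comap (ContinuousLinearMap.coeLM 𝕜)

theorem mem_strongDualAnnihilator {p : Submodule 𝕜 Y} {φ : StrongDual 𝕜 Y} :
    φ ∈ p.strongDualAnnihilator ↔ ∀ y ∈ p, φ y = 0 :=
  mem_dualAnnihilator (φ : Dual 𝕜 Y)

variable [CompleteSpace 𝕜] [IsTopologicalAddGroup Y] [ContinuousSMul 𝕜 Y]
  (p : Submodule 𝕜 Y) [IsClosed (p : Set Y)] [FiniteDimensional 𝕜 (Y ⧸ p)]

theorem dualAnnihilator_le_range_coeLM :
    p.dualAnnihilator ≤ LinearMap.range (ContinuousLinearMap.coeLM 𝕜) := by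
  intro φ hφ
  have hcont : Continuous (p.liftQ φ fun y hy ↦
      LinearMap.mem_ker.mpr ((mem_dualAnnihilator φ).mp hφ y hy)) :=
    LinearMap.continuous_of_finiteDimensional _
  exact ⟨⟨φ, hcont.comp p.continuous_mkQ⟩, rfl⟩

theorem finrank_strongDualAnnihilator :
    finrank 𝕜 p.strongDualAnnihilator = finrank 𝕜 (Y ⧸ p) := by
  have hmap : p.strongDualAnnihilator.map (ContinuousLinearMap.coeLM 𝕜) = p.dualAnnihilator := by
    rw [strongDualAnnihilator, map_comap_eq, inf_eq_right.mpr p.dualAnnihilator_le_range_coeLM]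
  calc finrank 𝕜 p.strongDualAnnihilator
      = finrank 𝕜 p.dualAnnihilator :=
        hmap ▸ (equivMapOfInjective _ ContinuousLinearMap.coe_injective _).finrank_eq
    _ = finrank 𝕜 (Dual 𝕜 (Y ⧸ p)) := (dualQuotEquivDualAnnihilator p).finrank_eq.symm
    _ = finrank 𝕜 (Y ⧸ p) := Subspace.dual_finrank_eq

end Submodule

open Submodule

section InnerPairing

variable {X Y H : Type*}
  [NormedAddCommGroup X] [NormedSpace ℝ X] [NormedAddCommGroup Y] [NormedSpace ℝ Y]
  [NormedAddCommGroup H] [InnerProductSpace ℝ H] (j : X →L[ℝ] H) (i : Y →L[ℝ] H)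

/-- The map `X → H ≅ H* → Y*` induced by `j : X → H` and `i : Y → H`. -/
noncomputable def innerPairing : X →ₗ[ℝ] StrongDual ℝ Y where
  toFun ξ := innerSL ℝ (j ξ) ∘L i
  map_add' _ _ := by ext; simp
  map_smul' _ _ := by ext; simp

@[simp]
theorem innerPairing_apply (ξ : X) (y : Y) : innerPairing j i ξ y = inner ℝ (j ξ) (i y) := rfl

variable {j i}

theorem innerPairing_injective (hj : Injective j) (hi : DenseRange i) :
    Injective (innerPairing j i) := by
  refine (injective_iff_map_eq_zero _).mpr fun ξ hξ ↦ ?_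
  have hjξ : j ξ = 0 := hi.eq_zero_of_inner_left ℝ fun y ↦ by
    simpa using congr($hξ y)
  exact hj (by simpa using hjξ)

variable {T : X →L[ℝ] Y}

theorem innerPairing_mem_strongDualAnnihilator_range_iff
    (hsym : ∀ x₁ x₂ : X, inner ℝ (i (T x₁)) (j x₂) = inner ℝ (j x₁) (i (T x₂)))
    (hj : DenseRange j) (hi : Injective i) {ξ : X} :
    innerPairing j i ξ ∈ (LinearMap.range (T : X →ₗ[ℝ] Y)).strongDualAnnihilator ↔ T ξ = 0 := by
  calc innerPairing j i ξ ∈ (LinearMap.range (T : X →ₗ[ℝ] Y)).strongDualAnnihilator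
      ↔ ∀ x, inner ℝ (i (T ξ)) (j x) = 0 := by
        simp [mem_strongDualAnnihilator, hsym]
    _ ↔ i (T ξ) = 0 := ⟨hj.eq_zero_of_inner_left ℝ, fun h x ↦ by simp [h]⟩
    _ ↔ T ξ = 0 := map_eq_zero_iff i hi

theorem map_ker_innerPairing_eq_strongDualAnnihilator_range
    (hsym : ∀ x₁ x₂ : X, inner ℝ (i (T x₁)) (j x₂) = inner ℝ (j x₁) (i (T x₂)))
    (hj : DenseRange j) (hi : Injective i)
    (hell : ∀ φ ∈ (LinearMap.range (T : X →ₗ[ℝ] Y)).strongDualAnnihilator,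
      φ ∈ LinearMap.range (innerPairing j i)) :
    (LinearMap.ker (T : X →ₗ[ℝ] Y)).map (innerPairing j i) =
      (LinearMap.range (T : X →ₗ[ℝ] Y)).strongDualAnnihilator := by
  ext φ
  constructor
  · rintro ⟨ξ, hξ, rfl⟩
    exact (innerPairing_mem_strongDualAnnihilator_range_iff hsym hj hi).mpr hξ
  · intro hφ
    obtain ⟨ξ, rfl⟩ := hell φ hφ
    exact ⟨ξ, (innerPairing_mem_strongDualAnnihilator_range_iff hsym hj hi).mp hφ, rfl⟩

theorem finrank_ker_eq_finrank_strongDualAnnihilator_range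
    (hsym : ∀ x₁ x₂ : X, inner ℝ (i (T x₁)) (j x₂) = inner ℝ (j x₁) (i (T x₂)))
    (hj_dense : DenseRange j) (hj_inj : Injective j)
    (hi_dense : DenseRange i) (hi_inj : Injective i)
    (hell : ∀ φ ∈ (LinearMap.range (T : X →ₗ[ℝ] Y)).strongDualAnnihilator,
      φ ∈ LinearMap.range (innerPairing j i)) :
    finrank ℝ (LinearMap.ker (T : X →ₗ[ℝ] Y)) =
      finrank ℝ (LinearMap.range (T : X →ₗ[ℝ] Y)).strongDualAnnihilator := by
  rw [← map_ker_innerPairing_eq_strongDualAnnihilator_range hsym hj_dense hi_inj hell]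
  exact (equivMapOfInjective _ (innerPairing_injective hj_inj hi_dense) _).finrank_eq

end InnerPairing

theorem index_zero_of_symmetric_elliptic_fredholm_general
    {X Y H : Type*}
    [NormedAddCommGroup X] [NormedSpace ℝ X]
    [NormedAddCommGroup Y] [NormedSpace ℝ Y]
    [NormedAddCommGroup H] [InnerProductSpace ℝ H]
    (iX : X →L[ℝ] Y) (iY : Y →L[ℝ] H)
    (hiX : Function.Injective iX) (hiY : Function.Injective iY)
    (hdX : DenseRange iX) (hdY : DenseRange iY)
    (T : X →L[ℝ] Y)
    -- Fredholm hypotheses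
    (hcl : IsClosed (LinearMap.range (T : X →ₗ[ℝ] Y) : Set Y))
    (hcoker : FiniteDimensional ℝ (Y ⧸ LinearMap.range (T : X →ₗ[ℝ] Y)))
    -- symmetry with respect to the inner product of `H`
    (hsym : ∀ x₁ x₂ : X,
      (inner ℝ (iY (T x₁)) (iY (iX x₂)) : ℝ) = inner ℝ (iY (iX x₁)) (iY (T x₂)))
    -- ellipticity: if `T* φ ∈ Y` then `φ ∈ X`
    (hell : ∀ φ : Y →L[ℝ] ℝ,
      (∃ y : Y, ∀ x : X, φ (T x) = (inner ℝ (iY y) (iY (iX x)) : ℝ)) →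
      ∃ ξ : X, ∀ y' : Y, φ y' = (inner ℝ (iY (iX ξ)) (iY y') : ℝ)) :
    Module.finrank ℝ (LinearMap.ker (T : X →ₗ[ℝ] Y)) =
      Module.finrank ℝ (Y ⧸ LinearMap.range (T : X →ₗ[ℝ] Y)) := by
  have hell_ker : ∀ φ ∈ (LinearMap.range (T : X →ₗ[ℝ] Y)).strongDualAnnihilator,
      φ ∈ LinearMap.range (innerPairing (iY ∘L iX) iY) := by
    intro φ hφ
    obtain ⟨ξ, hξ⟩ := hell φ ⟨0, fun x ↦ by simpa using mem_strongDualAnnihilator.mp hφ _ ⟨x, rfl⟩⟩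
    exact ⟨ξ, ContinuousLinearMap.ext fun y ↦ (hξ y).symm⟩
  have hj_dense : DenseRange (iY ∘L iX) := hdY.comp hdX iY.continuous
  have hj_inj : Function.Injective (iY ∘L iX) := hiY.comp hiX
  rw [finrank_ker_eq_finrank_strongDualAnnihilator_range hsym hj_dense hj_inj hdY hiY hell_ker,
    finrank_strongDualAnnihilator]

/-- Equivariant setup for symmetric Fredholm operators: if `X ↪ Y ↪ H` are continuous
dense injections into a real Hilbert space, `T : X → Y` is bounded Fredholm and symmetric
for the inner product of `H`, and `T` satisfies the ellipticity hypothesis that every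
weak solution lies in `X` (i.e. `(T*)⁻¹(Y) ⊆ X`), then the Fredholm index of `T` is zero. -/
theorem index_zero_of_symmetric_elliptic_fredholm
    {X Y H : Type*}
    [NormedAddCommGroup X] [NormedSpace ℝ X] [CompleteSpace X]
    [NormedAddCommGroup Y] [NormedSpace ℝ Y] [CompleteSpace Y]
    [NormedAddCommGroup H] [InnerProductSpace ℝ H] [CompleteSpace H]
    (iX : X →L[ℝ] Y) (iY : Y →L[ℝ] H)
    (hiX : Function.Injective iX) (hiY : Function.Injective iY)
    (hdX : DenseRange iX) (hdY : DenseRange iY)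
    (T : X →L[ℝ] Y)
    -- Fredholm hypotheses
    (hker : FiniteDimensional ℝ (LinearMap.ker (T : X →ₗ[ℝ] Y)))
    (hcl : IsClosed (LinearMap.range (T : X →ₗ[ℝ] Y) : Set Y))
    (hcoker : FiniteDimensional ℝ (Y ⧸ LinearMap.range (T : X →ₗ[ℝ] Y)))
    -- symmetry with respect to the inner product of `H`
    (hsym : ∀ x₁ x₂ : X,
      (inner ℝ (iY (T x₁)) (iY (iX x₂)) : ℝ) = inner ℝ (iY (iX x₁)) (iY (T x₂)))
    -- ellipticity: if `T* φ ∈ Y` then `φ ∈ X`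
    (hell : ∀ φ : Y →L[ℝ] ℝ,
      (∃ y : Y, ∀ x : X, φ (T x) = (inner ℝ (iY y) (iY (iX x)) : ℝ)) →
      ∃ ξ : X, ∀ y' : Y, φ y' = (inner ℝ (iY (iX ξ)) (iY y') : ℝ)) :
    Module.finrank ℝ (LinearMap.ker (T : X →ₗ[ℝ] Y)) =
      Module.finrank ℝ (Y ⧸ LinearMap.range (T : X →ₗ[ℝ] Y)) :=
  index_zero_of_symmetric_elliptic_fredholm_general iX iY hiX hiY hdX hdY T hcl hcoker hsym hell
end

section
/- Under the hypotheses of the ellipticity proposition (X ↪ Y ↪ H continuous dense inclusions, T : X → Y bounded Fredholm, symmetric for the H-inner product, and (T*)⁻¹(Y) ⊆ X), the Banach space Y decomposes as the direct sum Y = Im(T) ⊕ ker(T), and Im(T) and ker(T) are orthogonal with respect to the inner product of H. -/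
/-!
Orthogonality of `Im T` and `ker T` is the symmetry of `T`, and it already forces the sum to be
direct. For `Im T + ker T = Y` it suffices, since `Im T` is closed of finite codimension, that
every continuous functional `φ` vanishing on `Im T + ker T` is zero. Such a `φ` satisfies
`T* φ = 0 ∈ Y`, so ellipticity represents it as `⟪ξ, ·⟫` with `ξ ∈ X`; symmetry and density of
`X` in `H` give `Tξ = 0`, and then `‖ξ‖² = φ ξ = 0`.
-/

open scoped InnerProductSpace

theorem Submodule.eq_top_of_forall_continuousDual_eq_zero {𝕜 E : Type*}
    [NontriviallyNormedField 𝕜] [CompleteSpace 𝕜] [NormedAddCommGroup E] [NormedSpace 𝕜 E]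
    {R M : Submodule 𝕜 E} [IsClosed (R : Set E)] [FiniteDimensional 𝕜 (E ⧸ R)] (hRM : R ≤ M)
    (h : ∀ φ : E →L[𝕜] 𝕜, (∀ y ∈ M, φ y = 0) → φ = 0) : M = ⊤ := by
  by_contra hM
  have hP : M.map R.mkQ < ⊤ := by
    refine lt_top_iff_ne_top.2 fun hP => hM ?_
    rw [← sup_eq_right.2 hRM, ← Submodule.comap_map_mkQ, hP, Submodule.comap_top]
  obtain ⟨g, hg0, hgP⟩ := Submodule.exists_dual_map_eq_bot_of_lt_top hP inferInstance
  have hφ := h (LinearMap.toContinuousLinearMap g ∘L R.mkQL) fun y hy => by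
    simpa using (Submodule.eq_bot_iff _).1 hgP _
      (Submodule.mem_map_of_mem (Submodule.mem_map_of_mem hy))
  refine hg0 (LinearMap.ext fun q => ?_)
  obtain ⟨y, rfl⟩ := R.mkQ_surjective q
  simpa using congr($hφ y)

theorem disjoint_of_inner_map_eq_zero {𝕜 Y H : Type*} [RCLike 𝕜] [AddCommGroup Y] [Module 𝕜 Y]
    [NormedAddCommGroup H] [InnerProductSpace 𝕜 H] {i : Y →ₗ[𝕜] H} (hi : Function.Injective i)
    {A B : Submodule 𝕜 Y} (h : ∀ a ∈ A, ∀ b ∈ B, ⟪i a, i b⟫_𝕜 = 0) : Disjoint A B :=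
  Submodule.disjoint_def.2 fun y hyA hyB =>
    hi <| by rw [inner_self_eq_zero.1 (h y hyA y hyB), map_zero]

section SymmetricOperator

variable {X Y H : Type*} [NormedAddCommGroup X] [NormedSpace ℝ X]
  [NormedAddCommGroup Y] [NormedSpace ℝ Y] [NormedAddCommGroup H] [InnerProductSpace ℝ H]
  {iX : X →L[ℝ] Y} {iY : Y →L[ℝ] H} {T : X →L[ℝ] Y}

theorem inner_range_ker_eq_zero
    (hsym : ∀ x₁ x₂ : X, ⟪iY (T x₁), iY (iX x₂)⟫_ℝ = ⟪iY (iX x₁), iY (T x₂)⟫_ℝ) :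
    ∀ y ∈ LinearMap.range (T : X →ₗ[ℝ] Y), ∀ z ∈ (LinearMap.ker (T : X →ₗ[ℝ] Y)).map iX.toLinearMap,
      ⟪iY y, iY z⟫_ℝ = 0 := by
  rintro _ ⟨x₁, rfl⟩ _ ⟨x₂, hx₂, rfl⟩
  simp_all [hsym x₁ x₂]

theorem apply_eq_zero_of_inner_range_eq_zero (hiY : Function.Injective iY)
    (hd : DenseRange (iY ∘ iX))
    (hsym : ∀ x₁ x₂ : X, ⟪iY (T x₁), iY (iX x₂)⟫_ℝ = ⟪iY (iX x₁), iY (T x₂)⟫_ℝ) {ξ : X}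
    (hξ : ∀ x, ⟪iY (iX ξ), iY (T x)⟫_ℝ = 0) : T ξ = 0 :=
  hiY <| by
    rw [map_zero]
    exact hd.eq_zero_of_inner_left ℝ fun x => (hsym ξ x).trans (hξ x)

theorem continuousDual_eq_zero_of_vanishes_on_range_sup_ker (hiY : Function.Injective iY)
    (hd : DenseRange (iY ∘ iX))
    (hsym : ∀ x₁ x₂ : X, ⟪iY (T x₁), iY (iX x₂)⟫_ℝ = ⟪iY (iX x₁), iY (T x₂)⟫_ℝ)
    (hell : ∀ φ : Y →L[ℝ] ℝ, (∃ y : Y, ∀ x : X, φ (T x) = ⟪iY y, iY (iX x)⟫_ℝ) →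
      ∃ ξ : X, ∀ y' : Y, φ y' = ⟪iY (iX ξ), iY y'⟫_ℝ)
    (φ : Y →L[ℝ] ℝ)
    (hφ : ∀ y ∈ LinearMap.range (T : X →ₗ[ℝ] Y) ⊔
      (LinearMap.ker (T : X →ₗ[ℝ] Y)).map iX.toLinearMap, φ y = 0) : φ = 0 := by
  have hφT (x : X) : φ (T x) = 0 := hφ _ (Submodule.mem_sup_left ⟨x, rfl⟩)
  obtain ⟨ξ, hξ⟩ := hell φ ⟨0, fun x => by simp [hφT x]⟩
  have hTξ : T ξ = 0 :=
    apply_eq_zero_of_inner_range_eq_zero hiY hd hsym fun x => by rw [← hξ, hφT]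
  have hξ0 : iY (iX ξ) = 0 := by
    rw [← inner_self_eq_zero (𝕜 := ℝ), ← hξ]
    exact hφ _ (Submodule.mem_sup_right ⟨ξ, hTξ, rfl⟩)
  ext y
  simp [hξ, hξ0]

end SymmetricOperator

theorem decomposition_of_symmetric_elliptic_fredholm_general
    {X Y H : Type*}
    [NormedAddCommGroup X] [NormedSpace ℝ X]
    [NormedAddCommGroup Y] [NormedSpace ℝ Y]
    [NormedAddCommGroup H] [InnerProductSpace ℝ H]
    (iX : X →L[ℝ] Y) (iY : Y →L[ℝ] H)
    (hiY : Function.Injective iY)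
    (hdX : DenseRange iX) (hdY : DenseRange iY)
    (T : X →L[ℝ] Y)
    -- Fredholm hypotheses
    (hcl : IsClosed (LinearMap.range (T : X →ₗ[ℝ] Y) : Set Y))
    (hcoker : FiniteDimensional ℝ (Y ⧸ LinearMap.range (T : X →ₗ[ℝ] Y)))
    -- symmetry with respect to the inner product of `H`
    (hsym : ∀ x₁ x₂ : X,
      (inner ℝ (iY (T x₁)) (iY (iX x₂)) : ℝ) = inner ℝ (iY (iX x₁)) (iY (T x₂)))
    -- ellipticity: if `T* φ ∈ Y` then `φ ∈ X`
    (hell : ∀ φ : Y →L[ℝ] ℝ,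
      (∃ y : Y, ∀ x : X, φ (T x) = (inner ℝ (iY y) (iY (iX x)) : ℝ)) →
      ∃ ξ : X, ∀ y' : Y, φ y' = (inner ℝ (iY (iX ξ)) (iY y') : ℝ)) :
    IsCompl (LinearMap.range (T : X →ₗ[ℝ] Y)) ((LinearMap.ker (T : X →ₗ[ℝ] Y)).map iX.toLinearMap) ∧
      ∀ y ∈ LinearMap.range (T : X →ₗ[ℝ] Y), ∀ z ∈ (LinearMap.ker (T : X →ₗ[ℝ] Y)).map iX.toLinearMap,
        (inner ℝ (iY y) (iY z) : ℝ) = 0 := by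
  have horth := inner_range_ker_eq_zero hsym
  have hd : DenseRange (iY ∘ iX) := hdY.comp hdX iY.continuous
  refine ⟨⟨disjoint_of_inner_map_eq_zero (i := iY.toLinearMap) hiY horth, ?_⟩, horth⟩
  exact codisjoint_iff.2 <| Submodule.eq_top_of_forall_continuousDual_eq_zero le_sup_left
    (continuousDual_eq_zero_of_vanishes_on_range_sup_ker hiY hd hsym hell)

/-- Under the hypotheses of the ellipticity proposition, `Y` decomposes as the direct sum
of `Im(T)` and `ker(T)` (the latter viewed in `Y` via the inclusion `X ↪ Y`), and these
two subspaces are orthogonal with respect to the inner product of `H`. -/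
theorem decomposition_of_symmetric_elliptic_fredholm
    {X Y H : Type*}
    [NormedAddCommGroup X] [NormedSpace ℝ X] [CompleteSpace X]
    [NormedAddCommGroup Y] [NormedSpace ℝ Y] [CompleteSpace Y]
    [NormedAddCommGroup H] [InnerProductSpace ℝ H] [CompleteSpace H]
    (iX : X →L[ℝ] Y) (iY : Y →L[ℝ] H)
    (hiX : Function.Injective iX) (hiY : Function.Injective iY)
    (hdX : DenseRange iX) (hdY : DenseRange iY)
    (T : X →L[ℝ] Y)
    -- Fredholm hypotheses
    (hker : FiniteDimensional ℝ (LinearMap.ker (T : X →ₗ[ℝ] Y)))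
    (hcl : IsClosed (LinearMap.range (T : X →ₗ[ℝ] Y) : Set Y))
    (hcoker : FiniteDimensional ℝ (Y ⧸ LinearMap.range (T : X →ₗ[ℝ] Y)))
    -- symmetry with respect to the inner product of `H`
    (hsym : ∀ x₁ x₂ : X,
      (inner ℝ (iY (T x₁)) (iY (iX x₂)) : ℝ) = inner ℝ (iY (iX x₁)) (iY (T x₂)))
    -- ellipticity: if `T* φ ∈ Y` then `φ ∈ X`
    (hell : ∀ φ : Y →L[ℝ] ℝ,
      (∃ y : Y, ∀ x : X, φ (T x) = (inner ℝ (iY y) (iY (iX x)) : ℝ)) →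
      ∃ ξ : X, ∀ y' : Y, φ y' = (inner ℝ (iY (iX ξ)) (iY y') : ℝ)) :
    IsCompl (LinearMap.range (T : X →ₗ[ℝ] Y)) ((LinearMap.ker (T : X →ₗ[ℝ] Y)).map iX.toLinearMap) ∧
      ∀ y ∈ LinearMap.range (T : X →ₗ[ℝ] Y), ∀ z ∈ (LinearMap.ker (T : X →ₗ[ℝ] Y)).map iX.toLinearMap,
        (inner ℝ (iY y) (iY z) : ℝ) = 0 :=
  decomposition_of_symmetric_elliptic_fredholm_general iX iY hiY hdX hdY T hcl hcoker hsym hell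
end

section
/- There exist a Hilbert space H, Banach spaces X and Y with continuous dense inclusions X ↪ Y ↪ H, and a bounded Fredholm operator T : X → Y that is symmetric with respect to the inner product of H, such that the Fredholm index of T is −1 (in particular, nonzero). -/
/-!
Writing `g = f u`, the graph of `α` becomes `L²`, with `iX g = (g / u, ⟪1, g⟫)` and
`T g = (g, 0)` in `Y = H = L² ⊕ ℝ`. Abstractly, take a Hilbert space `E`, an injective symmetric
`M`, and `w ∉ range M` (here `M = 1/u`, `w = 1`, and `1 ∉ range M` because `u ∉ L²`); set
`iX g = (M g, ⟪w, g⟫)` and `T g = (g, 0)`. Then `T` is symmetric because `M` is, `T` is injective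
with cokernel `ℝ`, and `iX` has dense range: `(h, t) ⊥ range iX` means `M h + t w = 0`, which
forces `t = 0` and then `h = 0`. We realise this on `ℓ²(ℕ)` with `M` the diagonal operator with
entries `w n = 2⁻ⁿ`, so that `w = M 1` and `1 ∉ ℓ²`.
-/

open scoped ENNReal InnerProductSpace

namespace lp

variable {ι : Type*}

lemma norm_mul_apply_le (c : lp (fun _ : ι => ℝ) ∞) (g : lp (fun _ : ι => ℝ) 2) (i : ι) :
    ‖c i * g i‖ ≤ ‖c‖ * ‖g i‖ := by
  rw [norm_mul]
  gcongr
  exact norm_apply_le_norm ENNReal.top_ne_zero c i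

noncomputable def diagonal (c : lp (fun _ : ι => ℝ) ∞) :
    lp (fun _ : ι => ℝ) 2 →L[ℝ] lp (fun _ : ι => ℝ) 2 :=
  LinearMap.mkContinuous
    { toFun g := ⟨fun i => c i * g i,
        ((lp.memℓp g).norm.const_mul ‖c‖).mono (norm_mul_apply_le c g)⟩
      map_add' g h := by
        ext i
        simp only [coeFn_add, Pi.add_apply, mul_add]
      map_smul' a g := by
        ext i
        simp only [coeFn_smul, Pi.smul_apply, smul_eq_mul, RingHom.id_apply]
        ring }
    ‖c‖ fun g => calc
      _ ≤ ‖‖c‖ • g‖ := norm_mono two_ne_zero fun i => by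
        simpa [norm_smul] using norm_mul_apply_le c g i
      _ = ‖c‖ * ‖g‖ := by rw [norm_smul, norm_norm]

@[simp] lemma diagonal_apply (c : lp (fun _ : ι => ℝ) ∞) (g : lp (fun _ : ι => ℝ) 2) (i : ι) :
    diagonal c g i = c i * g i := rfl

lemma isSymmetric_diagonal (c : lp (fun _ : ι => ℝ) ∞) :
    (diagonal c : lp (fun _ : ι => ℝ) 2 →ₗ[ℝ] lp (fun _ : ι => ℝ) 2).IsSymmetric := fun g h => by
  simp only [ContinuousLinearMap.coe_coe, inner_eq_tsum, diagonal_apply, Real.inner_apply]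
  exact tsum_congr fun i => by ring

lemma diagonal_injective {c : lp (fun _ : ι => ℝ) ∞} (hc : ∀ i, c i ≠ 0) :
    Function.Injective (diagonal c) := fun g h hgh => by
  ext i
  exact mul_left_cancel₀ (hc i) (congrArg (· i) hgh)

lemma notMem_range_diagonal_self [Infinite ι] {w : lp (fun _ : ι => ℝ) 2} (hw : ∀ i, w i ≠ 0) :
    w ∉ Set.range (diagonal (linearMapOfLE ℝ _ le_top w)) := by
  rintro ⟨g, hg⟩
  have hg1 : ∀ i, g i = 1 := fun i => by
    have := congrArg (· i) hg
    simp only [diagonal_apply, coe_linearMapOfLE_apply] at this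
    exact mul_left_cancel₀ (hw i) (this.trans (mul_one _).symm)
  have := (lp.memℓp g).summable (by norm_num : 0 < (2 : ℝ≥0∞).toReal)
  simp only [hg1, norm_one, Real.one_rpow] at this
  exact Infinite.not_finite (Finite.of_summable_const one_pos this)

end lp

section InlL2

variable (E : Type*) [NormedAddCommGroup E] [NormedSpace ℝ E]

noncomputable def inlL2 : E →L[ℝ] WithLp 2 (E × ℝ) :=
  (WithLp.prodContinuousLinearEquiv 2 ℝ E ℝ).symm.toContinuousLinearMap ∘L
    ContinuousLinearMap.inl ℝ E ℝ

variable {E}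

@[simp] lemma inlL2_apply (x : E) : inlL2 E x = WithLp.toLp 2 (x, (0 : ℝ)) := rfl

lemma ker_inlL2 : LinearMap.ker (inlL2 E : E →ₗ[ℝ] WithLp 2 (E × ℝ)) = ⊥ :=
  LinearMap.ker_eq_bot.mpr fun x y h => by simpa using congrArg WithLp.fst h

lemma range_inlL2 :
    LinearMap.range (inlL2 E : E →ₗ[ℝ] WithLp 2 (E × ℝ)) =
      LinearMap.ker (WithLp.sndL 2 ℝ E ℝ : WithLp 2 (E × ℝ) →ₗ[ℝ] ℝ) := by
  ext z
  refine ⟨?_, fun hz => ⟨z.fst, ?_⟩⟩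
  · rintro ⟨x, rfl⟩
    simp
  · exact WithLp.ofLp_injective 2 (Prod.ext rfl hz.symm)

lemma isClosed_range_inlL2 :
    IsClosed (LinearMap.range (inlL2 E : E →ₗ[ℝ] WithLp 2 (E × ℝ)) : Set (WithLp 2 (E × ℝ))) := by
  rw [range_inlL2]
  exact (WithLp.sndL 2 ℝ E ℝ).isClosed_ker

noncomputable def quotientRangeInlL2Equiv :
    (WithLp 2 (E × ℝ) ⧸ LinearMap.range (inlL2 E : E →ₗ[ℝ] WithLp 2 (E × ℝ))) ≃ₗ[ℝ] ℝ :=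
  (Submodule.quotEquivOfEq _ _ range_inlL2).trans
    ((WithLp.sndL 2 ℝ E ℝ : WithLp 2 (E × ℝ) →ₗ[ℝ] ℝ).quotKerEquivOfSurjective
      fun t => ⟨WithLp.toLp 2 (0, t), rfl⟩)

end InlL2

section GraphEmbedding

variable {E : Type*} [NormedAddCommGroup E] [InnerProductSpace ℝ E]

noncomputable def graphEmbedding (M : E →L[ℝ] E) (w : E) : E →L[ℝ] WithLp 2 (E × ℝ) :=
  (WithLp.prodContinuousLinearEquiv 2 ℝ E ℝ).symm.toContinuousLinearMap ∘L M.prod (innerSL ℝ w)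

variable {M : E →L[ℝ] E} {w : E}

@[simp] lemma graphEmbedding_apply (x : E) :
    graphEmbedding M w x = WithLp.toLp 2 (M x, ⟪w, x⟫_ℝ) := rfl

lemma graphEmbedding_injective (hM : Function.Injective M) :
    Function.Injective (graphEmbedding M w) := fun x y h =>
  hM (by simpa using congrArg WithLp.fst h)

lemma inner_inlL2_graphEmbedding (hM : (M : E →ₗ[ℝ] E).IsSymmetric) (x y : E) :
    ⟪inlL2 E x, graphEmbedding M w y⟫_ℝ = ⟪graphEmbedding M w x, inlL2 E y⟫_ℝ := by
  simpa [WithLp.prod_inner_apply] using (hM x y).symm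

lemma denseRange_graphEmbedding [CompleteSpace E] (hM : (M : E →ₗ[ℝ] E).IsSymmetric)
    (hinj : Function.Injective M) (hw : w ∉ Set.range M) :
    DenseRange (graphEmbedding M w) := by
  rw [denseRange_iff_closure_range]
  change closure ((LinearMap.range (graphEmbedding M w : E →ₗ[ℝ] WithLp 2 (E × ℝ)) :
    Set (WithLp 2 (E × ℝ)))) = _
  rw [← Submodule.topologicalClosure_coe, Submodule.topologicalClosure_eq_top_iff.mpr,
    Submodule.top_coe]
  refine (Submodule.eq_bot_iff _).mpr fun z hz => ?_
  have horth : ∀ x, ⟪x, M z.fst + z.snd • w⟫_ℝ = 0 := fun x => by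
    have := hz _ (LinearMap.mem_range_self _ x)
    simp only [ContinuousLinearMap.coe_coe, graphEmbedding_apply, WithLp.prod_inner_apply] at this
    rw [inner_add_right, inner_smul_right, ← ContinuousLinearMap.coe_coe M, ← hM, real_inner_comm w]
    simpa [Real.inner_apply, mul_comm] using this
  have hsum : M z.fst + z.snd • w = 0 := inner_self_eq_zero.mp (horth _)
  have hsnd : z.snd = 0 := by
    by_contra ht
    refine hw ⟨-(z.snd⁻¹ • z.fst), ?_⟩
    rw [map_neg, map_smul, neg_eq_iff_add_eq_zero, ← inv_smul_smul₀ ht w, ← smul_add, hsum,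
      smul_zero]
  have hfst : z.fst = 0 := hinj (by simpa [hsnd] using hsum)
  exact WithLp.ofLp_injective 2 (Prod.ext hfst hsnd)

end GraphEmbedding

lemma memℓp_two_geometric : Memℓp (fun n : ℕ => (2 : ℝ)⁻¹ ^ n) 2 := by
  refine memℓp_gen ?_
  simp only [ENNReal.toReal_ofNat, Real.rpow_two, norm_pow, norm_inv, Real.norm_ofNat, ← pow_mul]
  simp_rw [mul_comm _ 2, pow_mul]
  exact summable_geometric_of_lt_one (by positivity) (by norm_num)

/-- There exist a real Hilbert space `H`, Banach spaces `X`, `Y` with continuous dense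
injections `X ↪ Y ↪ H`, and a bounded Fredholm operator `T : X → Y` that is symmetric
with respect to the inner product of `H`, whose Fredholm index is `-1`. -/
theorem exists_symmetric_fredholm_of_index_neg_one :
    ∃ (H : Type) (_ : NormedAddCommGroup H) (_ : InnerProductSpace ℝ H)
      (_ : CompleteSpace H)
      (X : Type) (_ : NormedAddCommGroup X) (_ : NormedSpace ℝ X) (_ : CompleteSpace X)
      (Y : Type) (_ : NormedAddCommGroup Y) (_ : NormedSpace ℝ Y) (_ : CompleteSpace Y)
      (iX : X →L[ℝ] Y) (iY : Y →L[ℝ] H) (T : X →L[ℝ] Y),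
      Function.Injective iX ∧ Function.Injective iY ∧
      DenseRange iX ∧ DenseRange iY ∧
      -- Fredholm hypotheses
      FiniteDimensional ℝ (LinearMap.ker (T : X →ₗ[ℝ] Y)) ∧
      IsClosed (LinearMap.range (T : X →ₗ[ℝ] Y) : Set Y) ∧
      FiniteDimensional ℝ (Y ⧸ LinearMap.range (T : X →ₗ[ℝ] Y)) ∧
      -- symmetry with respect to the inner product of `H`
      (∀ x₁ x₂ : X,
        (inner ℝ (iY (T x₁)) (iY (iX x₂)) : ℝ) = inner ℝ (iY (iX x₁)) (iY (T x₂))) ∧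
      -- the Fredholm index is `-1`
      (Module.finrank ℝ (LinearMap.ker (T : X →ₗ[ℝ] Y)) : ℤ) -
        (Module.finrank ℝ (Y ⧸ LinearMap.range (T : X →ₗ[ℝ] Y)) : ℤ) = -1 := by
  set w : lp (fun _ : ℕ => ℝ) 2 := ⟨_, memℓp_two_geometric⟩
  have hw : ∀ n, w n ≠ 0 := fun n => pow_ne_zero n (by norm_num)
  set M := lp.diagonal (lp.linearMapOfLE ℝ _ le_top w)
  have hMsymm : (M : lp (fun _ : ℕ => ℝ) 2 →ₗ[ℝ] lp (fun _ : ℕ => ℝ) 2).IsSymmetric :=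
    lp.isSymmetric_diagonal _
  have hMinj : Function.Injective M := lp.diagonal_injective hw
  refine ⟨WithLp 2 (lp (fun _ : ℕ => ℝ) 2 × ℝ), inferInstance, inferInstance, inferInstance,
    lp (fun _ : ℕ => ℝ) 2, inferInstance, inferInstance, inferInstance,
    WithLp 2 (lp (fun _ : ℕ => ℝ) 2 × ℝ), inferInstance, inferInstance, inferInstance,
    graphEmbedding M w, ContinuousLinearMap.id ℝ _, inlL2 _,
    graphEmbedding_injective hMinj, Function.injective_id,
    denseRange_graphEmbedding hMsymm hMinj (lp.notMem_range_diagonal_self hw), denseRange_id,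
    ?_, isClosed_range_inlL2, Module.Finite.equiv quotientRangeInlL2Equiv.symm,
    inner_inlL2_graphEmbedding hMsymm, ?_⟩
  · rw [ker_inlL2]
    infer_instance
  · rw [ker_inlL2, finrank_bot, quotientRangeInlL2Equiv.finrank_eq, Module.finrank_self]
    norm_num
end

section
/- Let E and F be Banach spaces. The set of bounded linear operators T : E → F that are surjective and whose kernel is complemented in E is open in the space of bounded operators with the operator norm topology. -/
/-!
Surjectivity with complemented kernel means exactly that `T` has a bounded right inverse: if
`P` is a bounded projection onto `ker T`, then `x ↦ (T x, P x)` is an isomorphism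
`E ≃ F × ker T` by the open mapping theorem, and conversely `S T` is a bounded projection with
kernel `ker T` whenever `T S = 1`. If `T S = 1`, then `T' S` lies in the open set of units of
the Banach algebra `F →L F` for all `T'` close to `T`, and `S (T' S)⁻¹` is a right inverse
of `T'`.
-/

open Function Topology

namespace ContinuousLinearMap

variable {𝕜 E F : Type*} [NontriviallyNormedField 𝕜]
  [NormedAddCommGroup E] [NormedSpace 𝕜 E] [NormedAddCommGroup F] [NormedSpace 𝕜 F]

theorem HasRightInverse.of_surjective_of_closedComplemented_ker [CompleteSpace E]
    [CompleteSpace F] {T : E →L[𝕜] F} (hT : Surjective T) (hker : T.ker.ClosedComplemented) :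
    T.HasRightInverse := by
  obtain ⟨P, hP⟩ := hker
  let e := equivProdOfSurjectiveOfIsCompl T P (LinearMap.range_eq_top.2 hT)
    (LinearMap.range_eq_of_proj hP) (LinearMap.isCompl_of_proj hP)
  exact ⟨(e.symm : F × T.ker →L[𝕜] E).comp (inl 𝕜 F _),
    fun y => congrArg Prod.fst (e.apply_symm_apply (y, 0))⟩

theorem hasRightInverse_iff_surjective_and_closedComplemented_ker [CompleteSpace E]
    [CompleteSpace F] {T : E →L[𝕜] F} :
    T.HasRightInverse ↔ Surjective T ∧ T.ker.ClosedComplemented :=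
  ⟨fun ⟨S, hS⟩ => ⟨hS.surjective, T.closedComplemented_ker_of_rightInverse S hS⟩,
    fun h => .of_surjective_of_closedComplemented_ker h.1 h.2⟩

theorem HasRightInverse.of_isUnit {A : F →L[𝕜] F} (hA : IsUnit A) : A.HasRightInverse := by
  obtain ⟨u, rfl⟩ := hA
  exact .of_isInvertible ⟨ContinuousLinearEquiv.unitsEquiv 𝕜 F u, rfl⟩

theorem HasRightInverse.eventually [CompleteSpace F] {T : E →L[𝕜] F} (hT : T.HasRightInverse) :
    ∀ᶠ T' in 𝓝 T, T'.HasRightInverse := by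
  obtain ⟨S, hS⟩ := hT
  have hTS : T.comp S = 1 := ext hS
  have hcont : Continuous fun T' : E →L[𝕜] F => T'.comp S := ((compL 𝕜 F E F).flip S).continuous
  have hunit : ∀ᶠ A in 𝓝 (T.comp S), IsUnit A := by
    rw [hTS]
    exact Units.isOpen.mem_nhds isUnit_one
  exact (hcont.tendsto T |>.eventually hunit).mono fun _ hT' =>
    (HasRightInverse.of_isUnit hT').of_comp

theorem isOpen_setOf_hasRightInverse [CompleteSpace F] :
    IsOpen {T : E →L[𝕜] F | T.HasRightInverse} :=
  isOpen_iff_eventually.2 fun _ => HasRightInverse.eventually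

end ContinuousLinearMap

/-- The set of bounded linear operators between Banach spaces that are surjective and
have complemented kernel is open in the operator norm topology. -/
theorem surjective_closedComplemented_ker_isOpen
    (E F : Type*) [NormedAddCommGroup E] [NormedSpace ℝ E] [CompleteSpace E]
    [NormedAddCommGroup F] [NormedSpace ℝ F] [CompleteSpace F] :
    IsOpen {T : E →L[ℝ] F |
      Function.Surjective T ∧ (LinearMap.ker (T : E →ₗ[ℝ] F)).ClosedComplemented} := by
  simpa only [ContinuousLinearMap.hasRightInverse_iff_surjective_and_closedComplemented_ker]
    using ContinuousLinearMap.isOpen_setOf_hasRightInverse (𝕜 := ℝ) (E := E) (F := F)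
end
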